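/- Let (E,d) be a metric space, let α > 0 be a countable ordinal, and let p be a natural number. Suppose that every compact countable subset K̃ of E with Cantor–Bendixson characteristic (α,1) is homeomorphic to the ordinal ω^α + 1 with its order topology. Then every compact countable subset K of E with Cantor–Bendixson characteristic (α,p) is homeomorphic to the ordinal ω^α·p + 1 with its order topology. -/

import Mathlib

open Ordinal Set

/-- The `α`-th Cantor–Bendixson derivative of a set `A`, defined by transfinite
recursion: `A^(0) = A`, `A^(β+1) = (A^(β))'` (derived set in the ambient space),
and `A^(λ) = ⋂_{γ<λ} A^(γ)` at nonzero limit ordinals. -/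
noncomputable def cbDeriv {X : Type*} [TopologicalSpace X] (A : Set X) (o : Ordinal) : Set X :=
  Ordinal.limitRecOn o A (fun _ ih => derivedSet ih)
    (fun o _ ih => ⋂ (β : Ordinal) (h : β < o), ih β h)

/-- `A` has Cantor–Bendixson characteristic `(α, p)`: `α` is the least ordinal such
that the `α`-th Cantor–Bendixson derivative of `A` is finite, and that derivative has
exactly `p` elements. -/
def HasCBChar {X : Type*} [TopologicalSpace X] (A : Set X) (α : Ordinal) (p : ℕ) : Prop :=
  (cbDeriv A α).Finite ∧ (∀ β < α, ¬ (cbDeriv A β).Finite) ∧ (cbDeriv A α).ncard = p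

/-!
Induct on `p`. A countable metric space is zero-dimensional: all but countably many spheres
around a point miss `K`, so `K` splits into two disjoint closed pieces, one containing exactly
one point of `K^(α)` and the other the remaining `p - 1`. Derivatives of a partition into closed
sets are computed piecewise, so the pieces have characteristics `(α, 1)` and `(α, p - 1)`, and
the ordinal intervals glue because `ω^α·(p - 1) + 1 + ω^α = ω^α·p`. Compactness makes `K^(α)`
nonempty, which rules out `p = 0`.
-/

open Topology

lemma Set.Finite.derivedSet_eq_empty {X : Type*} [TopologicalSpace X] [T1Space X] {A : Set X}
    (hA : A.Finite) : derivedSet A = ∅ := by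
  refine eq_empty_of_forall_notMem fun x hx => ?_
  have hclosed : IsClosed (A \ {x}) := (hA.subset sdiff_subset).isClosed
  obtain ⟨y, ⟨hyU, hyA⟩, hyx⟩ :=
    accPt_iff_nhds.mp hx _ (hclosed.isOpen_compl.mem_nhds fun h => h.2 rfl)
  exact hyU ⟨hyA, hyx⟩

section CantorBendixson

variable {X : Type*} [TopologicalSpace X]

@[simp]
lemma cbDeriv_zero (A : Set X) : cbDeriv A 0 = A :=
  Ordinal.limitRecOn_zero _ _ _

lemma cbDeriv_add_one (A : Set X) (o : Ordinal) :
    cbDeriv A (o + 1) = derivedSet (cbDeriv A o) :=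
  Ordinal.limitRecOn_add_one _ _ _ _

lemma cbDeriv_limit (A : Set X) {o : Ordinal} (ho : Order.IsSuccLimit o) :
    cbDeriv A o = ⋂ β : Iio o, cbDeriv A β := by
  rw [cbDeriv, Ordinal.limitRecOn_limit _ _ _ _ ho, iInter_subtype]
  rfl

variable [T1Space X] {A B : Set X}

lemma isClosed_cbDeriv (hA : IsClosed A) (o : Ordinal) : IsClosed (cbDeriv A o) := by
  induction o using Ordinal.limitRecOn with
  | zero => rwa [cbDeriv_zero]
  | add_one o _ => rw [cbDeriv_add_one]; exact isClosed_derivedSet _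
  | limit o ho ih => rw [cbDeriv_limit A ho]; exact isClosed_iInter fun β => ih β β.2

lemma cbDeriv_antitone (hA : IsClosed A) : Antitone (cbDeriv A) := by
  intro β o hβo
  induction o using Ordinal.limitRecOn with
  | zero => rw [nonpos_iff_eq_zero.mp hβo]
  | add_one o ih =>
    rcases hβo.eq_or_lt with rfl | hβ
    · rfl
    · rw [cbDeriv_add_one]
      exact ((isClosed_iff_derivedSet_subset _).mp (isClosed_cbDeriv hA o)).trans
        (ih (Order.lt_add_one_iff.mp hβ))
  | limit o ho _ =>
    rcases hβo.eq_or_lt with rfl | hβ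
    · rfl
    · rw [cbDeriv_limit A ho]
      exact iInter_subset_of_subset ⟨β, hβ⟩ le_rfl

lemma cbDeriv_subset (hA : IsClosed A) (o : Ordinal) : cbDeriv A o ⊆ A := by
  simpa using cbDeriv_antitone hA (bot_le (a := o))

lemma cbDeriv_union (hA : IsClosed A) (hB : IsClosed B) (o : Ordinal) :
    cbDeriv (A ∪ B) o = cbDeriv A o ∪ cbDeriv B o := by
  induction o using Ordinal.limitRecOn with
  | zero => simp
  | add_one o ih => rw [cbDeriv_add_one, cbDeriv_add_one, cbDeriv_add_one, ih, derivedSet_union]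
  | limit o ho ih =>
    have hanti {C : Set X} (hC : IsClosed C) : Antitone fun β : Iio o => cbDeriv C β :=
      fun _ _ h => cbDeriv_antitone hC h
    rw [cbDeriv_limit _ ho, cbDeriv_limit _ ho, cbDeriv_limit _ ho,
      ← iInter_union_of_antitone (hanti hA) (hanti hB)]
    exact iInter_congr fun β => ih β β.2

lemma cbDeriv_union_inter_left (hA : IsClosed A) (hB : IsClosed B) (hAB : Disjoint A B)
    (o : Ordinal) : cbDeriv (A ∪ B) o ∩ A = cbDeriv A o := by
  rw [cbDeriv_union hA hB, union_inter_distrib_right,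
    inter_eq_self_of_subset_left (cbDeriv_subset hA o),
    (hAB.symm.mono_left (cbDeriv_subset hB o)).inter_eq, union_empty]

lemma hasCBChar_of_ncard_eq (hA : IsClosed A) {α : Ordinal} {p : ℕ} (hp : 0 < p)
    (hcard : (cbDeriv A α).ncard = p) : HasCBChar A α p := by
  have hpos : 0 < (cbDeriv A α).ncard := hcard ▸ hp
  refine ⟨finite_of_ncard_pos hpos, fun β hβ hβfin => ?_, hcard⟩
  have hempty : cbDeriv A α ⊆ ∅ :=
    calc cbDeriv A α ⊆ cbDeriv A (β + 1) := cbDeriv_antitone hA (Order.add_one_le_of_lt hβ)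
      _ = ∅ := by rw [cbDeriv_add_one, hβfin.derivedSet_eq_empty]
  exact (nonempty_of_ncard_ne_zero hpos.ne').ne_empty (subset_empty_iff.mp hempty)

lemma IsCompact.cbDeriv_nonempty [T2Space X] (hA : IsCompact A) {α : Ordinal} (hα : 0 < α)
    (hinf : ∀ β < α, ¬ (cbDeriv A β).Finite) : (cbDeriv A α).Nonempty := by
  induction α using Ordinal.limitRecOn with
  | zero => exact (lt_irrefl _ hα).elim
  | add_one o _ =>
    obtain ⟨x, -, hx⟩ := Set.Infinite.exists_accPt_of_subset_isCompact
      (hinf o (Order.lt_add_one_iff.mpr le_rfl)) hA (cbDeriv_subset hA.isClosed o)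
    rw [cbDeriv_add_one]
    exact ⟨x, hx⟩
  | limit o ho _ =>
    have : Nonempty (Iio o) := ⟨⟨0, ho.bot_lt⟩⟩
    rw [cbDeriv_limit A ho]
    exact IsCompact.nonempty_iInter_of_directed_nonempty_isCompact_isClosed _
      (fun i j => ⟨max i j, cbDeriv_antitone hA.isClosed (le_max_left i j),
        cbDeriv_antitone hA.isClosed (le_max_right i j)⟩)
      (fun β => Set.Infinite.nonempty (hinf β β.2))
      (fun β => hA.of_isClosed_subset (isClosed_cbDeriv hA.isClosed β)
        (cbDeriv_subset hA.isClosed β))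
      (fun β => isClosed_cbDeriv hA.isClosed β)

lemma HasCBChar.pos [T2Space X] {α : Ordinal} {p : ℕ} (h : HasCBChar A α p)
    (hA : IsCompact A) (hα : 0 < α) : 0 < p :=
  h.2.2 ▸ (ncard_pos h.1).mpr (hA.cbDeriv_nonempty hα h.2.1)

end CantorBendixson

section Separation

variable {E : Type*} [MetricSpace E] {K : Set E}

/-- Only countably many radii are distances from `x` to points of `K`, while `(0, d)` is
uncountable. -/
lemma Set.Countable.exists_disjoint_sphere (hK : K.Countable) (x : E) {d : ℝ} (hd : 0 < d) :
    ∃ r ∈ Ioo 0 d, Disjoint K (Metric.sphere x r) := by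
  have hIoo : ¬ (Ioo (0 : ℝ) d).Countable := by
    rw [← Cardinal.le_aleph0_iff_set_countable, Cardinal.mk_Ioo_real hd]
    exact Cardinal.aleph0_lt_continuum.not_ge
  obtain ⟨r, hr, hrK⟩ := not_subset.mp fun h => hIoo ((hK.image (dist · x)).mono h)
  exact ⟨r, hr, disjoint_left.mpr fun z hz hzr => hrK ⟨z, hz, hzr⟩⟩

lemma Set.Countable.exists_isClosed_partition (hKc : K.Countable) (hK : IsClosed K) {x : E}
    (hx : x ∈ K) {s : Set E} (hs : s ∈ 𝓝 x) :
    ∃ U V, IsClosed U ∧ IsClosed V ∧ Disjoint U V ∧ U ∪ V = K ∧ x ∈ U ∧ U ⊆ s := by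
  obtain ⟨d, hd, hds⟩ := Metric.mem_nhds_iff.mp hs
  obtain ⟨r, ⟨hr, hrd⟩, hKr⟩ := hKc.exists_disjoint_sphere x hd
  refine ⟨K ∩ Metric.closedBall x r, K \ Metric.ball x r, hK.inter Metric.isClosed_closedBall,
    hK.sdiff Metric.isOpen_ball, ?_, ?_, ⟨hx, Metric.mem_closedBall_self hr.le⟩,
    inter_subset_right.trans ((Metric.closedBall_subset_ball hrd).trans hds)⟩
  · refine disjoint_left.mpr fun z ⟨hzK, hzr⟩ ⟨_, hzr'⟩ => disjoint_left.mp hKr hzK ?_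
    exact le_antisymm (Metric.mem_closedBall.mp hzr) (not_lt.mp hzr')
  · refine (union_subset inter_subset_left sdiff_subset).antisymm ?_
    calc K = K ∩ Metric.closedBall x r ∪ K \ Metric.closedBall x r := (inter_union_sdiff _ _).symm
      _ ⊆ K ∩ Metric.closedBall x r ∪ K \ Metric.ball x r :=
        union_subset_union_right _ (sdiff_subset_sdiff_right Metric.ball_subset_closedBall)

lemma HasCBChar.exists_partition (hK : IsClosed K) (hKc : K.Countable) {α : Ordinal} {p : ℕ}
    (hp : 0 < p) (h : HasCBChar K α (p + 1)) :
    ∃ U V, IsClosed U ∧ IsClosed V ∧ Disjoint U V ∧ U ∪ V = K ∧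
      HasCBChar U α 1 ∧ HasCBChar V α p := by
  obtain ⟨hfin, -, hcard⟩ := h
  obtain ⟨x, hx⟩ : (cbDeriv K α).Nonempty := nonempty_of_ncard_ne_zero (by omega)
  have hs : (cbDeriv K α \ {x})ᶜ ∈ 𝓝 x :=
    (hfin.subset sdiff_subset).isClosed.isOpen_compl.mem_nhds fun h => h.2 rfl
  obtain ⟨U, V, hU, hV, hUV, rfl, hxU, hUs⟩ :=
    hKc.exists_isClosed_partition hK (cbDeriv_subset hK α hx) hs
  have hDU : cbDeriv U α = {x} := by
    rw [← cbDeriv_union_inter_left hU hV hUV]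
    ext z
    refine ⟨fun ⟨hzD, hzU⟩ => ?_, fun hzx => hzx ▸ ⟨hx, hxU⟩⟩
    by_contra hzx
    exact hUs hzU ⟨hzD, hzx⟩
  have hDV : cbDeriv V α = cbDeriv (U ∪ V) α \ {x} := by
    rw [← cbDeriv_union_inter_left hV hU hUV.symm, union_comm V U]
    ext z
    refine ⟨fun ⟨hzD, hzV⟩ => ⟨hzD, fun hzx => disjoint_left.mp hUV (hzx ▸ hxU) hzV⟩,
      fun ⟨hzD, hzx⟩ => ⟨hzD, ?_⟩⟩
    exact (cbDeriv_subset hK α hzD).resolve_left fun hzU => hUs hzU ⟨hzD, hzx⟩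
  refine ⟨U, V, hU, hV, hUV, rfl, hasCBChar_of_ncard_eq hU one_pos (by rw [hDU, ncard_singleton]),
    hasCBChar_of_ncard_eq hV hp ?_⟩
  rw [hDV, ncard_sdiff_singleton_of_mem hx, hcard, Nat.add_sub_cancel]

end Separation

open Classical in
noncomputable def IsCompact.unionHomeomorphSum {X : Type*} [TopologicalSpace X] [T2Space X]
    {U V : Set X} (hU : IsCompact U) (hV : IsCompact V) (hUV : Disjoint U V) :
    ↥(U ∪ V) ≃ₜ U ⊕ V :=
  have : CompactSpace U := isCompact_iff_compactSpace.mp hU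
  have : CompactSpace V := isCompact_iff_compactSpace.mp hV
  (Continuous.homeoOfEquivCompactToT2 (f := (Equiv.Set.union hUV).symm)
    (continuous_sum_dom.mpr ⟨continuous_inclusion subset_union_left,
      continuous_inclusion subset_union_right⟩)).symm

namespace Ordinal

def iicSumIicToIic (a b : Ordinal) : Iic a ⊕ Iic b → Iic (a + 1 + b) :=
  Sum.elim (inclusion (Iic_subset_Iic.mpr (le_self_add.trans le_self_add)))
    fun y => ⟨a + 1 + y, mem_Iic.mpr ((add_le_add_iff_left _).mpr y.2)⟩

lemma continuous_iicSumIicToIic (a b : Ordinal) : Continuous (iicSumIicToIic a b) := by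
  unfold iicSumIicToIic
  exact (continuous_inclusion _).sumElim
    (((isNormal_add_right _).continuous.comp continuous_subtype_val).subtype_mk _)

lemma bijective_iicSumIicToIic (a b : Ordinal) : Function.Bijective (iicSumIicToIic a b) := by
  unfold iicSumIicToIic
  have hlt (y : Ordinal) : a < a + 1 + y := (Order.lt_add_one_iff.mpr le_rfl).trans_le le_self_add
  refine ⟨(inclusion_injective _).sumElim (fun y z h => Subtype.ext ?_) fun x y h => ?_, ?_⟩
  · exact (isNormal_add_right _).strictMono.injective (congrArg Subtype.val h)
  · have hxy : (x : Ordinal) = a + 1 + y := congrArg Subtype.val h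
    exact (hlt y).not_ge (hxy ▸ x.2)
  · rintro ⟨z, hz⟩
    rcases le_or_gt z a with hza | haz
    · exact ⟨.inl ⟨z, hza⟩, rfl⟩
    · have hz' : a + 1 + (z - (a + 1)) = z :=
        Ordinal.add_sub_cancel_of_le (Order.add_one_le_of_lt haz)
      exact ⟨.inr ⟨z - (a + 1), (add_le_add_iff_left (a + 1)).mp (hz'.symm ▸ hz)⟩, Subtype.ext hz'⟩

noncomputable def iicSumIicHomeomorph (a b : Ordinal) : Iic a ⊕ Iic b ≃ₜ Iic (a + 1 + b) :=
  have (c : Ordinal) : CompactSpace (Iic c) :=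
    isCompact_iff_compactSpace.mp (Icc_bot (a := c) ▸ isCompact_Icc)
  (continuous_iicSumIicToIic a b).homeoOfEquivCompactToT2
    (f := Equiv.ofBijective _ (bijective_iicSumIicToIic a b))

lemma omega0_opow_mul_add_one_add {α : Ordinal} (hα : 0 < α) (p : ℕ) :
    ω ^ α * p + 1 + ω ^ α = ω ^ α * ↑(p + 1) := by
  rw [add_assoc, one_add_of_omega0_le (left_le_opow ω hα), Nat.cast_succ, mul_add_one]

end Ordinal

theorem stmt4_general {E : Type*} [MetricSpace E] (α : Ordinal) (hα : 0 < α)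
    (p : ℕ)
    (H : ∀ K' : Set E, IsCompact K' → K'.Countable → HasCBChar K' α 1 →
      Nonempty (↥K' ≃ₜ ↥(Set.Iic (ω ^ α))))
    (K : Set E) (hK : IsCompact K) (hKcount : K.Countable) (hchar : HasCBChar K α p) :
    Nonempty (↥K ≃ₜ ↥(Set.Iic (ω ^ α * (p : Ordinal)))) := by
  induction p, hchar.pos hK hα using Nat.le_induction generalizing K with
  | base => rw [Nat.cast_one, mul_one]; exact H K hK hKcount hchar
  | succ p hp ih =>
    obtain ⟨U, V, hU, hV, hUV, rfl, hUchar, hVchar⟩ :=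
      hchar.exists_partition hK.isClosed hKcount hp
    have hUc : IsCompact U := hK.of_isClosed_subset hU subset_union_left
    have hVc : IsCompact V := hK.of_isClosed_subset hV subset_union_right
    obtain ⟨eU⟩ := H U hUc (hKcount.mono subset_union_left) hUchar
    obtain ⟨eV⟩ := ih V hVc (hKcount.mono subset_union_right) hVchar
    exact ⟨(hUc.unionHomeomorphSum hVc hUV).trans <| (Homeomorph.sumComm _ _).trans <|
      (eV.sumCongr eU).trans <| (iicSumIicHomeomorph _ _).trans <|
      Homeomorph.setCongr (by rw [omega0_opow_mul_add_one_add hα])⟩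

theorem stmt4 {E : Type*} [MetricSpace E] (α : Ordinal) (hα : 0 < α) (hαcount : α < ω_ 1)
    (p : ℕ)
    (H : ∀ K' : Set E, IsCompact K' → K'.Countable → HasCBChar K' α 1 →
      Nonempty (↥K' ≃ₜ ↥(Set.Iic (ω ^ α))))
    (K : Set E) (hK : IsCompact K) (hKcount : K.Countable) (hchar : HasCBChar K α p) :
    Nonempty (↥K ≃ₜ ↥(Set.Iic (ω ^ α * (p : Ordinal)))) :=
  stmt4_general α hα p H K hK hKcount hchar
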